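/- For every q ≥ 1 and every monomial m of total (s,t)-degree q·d·e in k[s,t], m ∈ R; that is, the degree-(qe) component of R has full dimension d·q·e + 1. -/

import Mathlib

/-! The generators `s^(d-i) t^i` with `i < d` are the degree-`d` monomials divisible by `s`, so
products of `e` of them give every degree-`de` monomial `s^u t^v` with `u ≥ e`; those with `u < e`
are the remaining generators `s^u t^(de-u)`. Hence `R` contains every monomial of degree `de`, so
also every monomial of degree `qde`, and the degree-`qde` part of `R` is the whole space of binary
forms of that degree, of dimension `qde + 1`. -/

open MvPolynomial

/-- Generators of the coordinate ring `R` of the weighted rational curve of type `(d,e)`. -/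
noncomputable def wrcGens9 (k : Type*) [Field k] (d e : ℕ) : Set (MvPolynomial (Fin 2) k) :=
  ((fun i => X 0 ^ (d - i) * X 1 ^ i) '' Set.Iic (d - 1)) ∪
  ((fun j => X 0 ^ (e - 1 - j) * X 1 ^ (d * e - (e - 1) + j)) '' Set.Iic (e - 1))

theorem MvPolynomial.finrank_homogeneousSubmodule (σ k : Type*) [Fintype σ] [CommRing k]
    [StrongRankCondition k] (n : ℕ) :
    Module.finrank k (homogeneousSubmodule σ k n) = (Fintype.card σ + n - 1).choose n := by
  classical
  have hset :
      {d : σ →₀ ℕ | d.degree = n} = ↑((Finset.univ : Finset σ).finsuppAntidiag n) := by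
    ext d; simp [Finsupp.degree_eq_sum]
  rw [homogeneousSubmodule_eq_finsupp_supported,
    (AddMonoidAlgebra.supportedEquivFinsupp _).finrank_eq, hset, Module.finrank_finsupp_self]
  simp [Finset.card_finsuppAntidiag_nat_eq_choose]

section MonomialContainment

variable {k : Type*} [CommSemiring k]

def ContainsMonomials (S : Subalgebra k (MvPolynomial (Fin 2) k)) (n a : ℕ) : Prop :=
  ∀ u v : ℕ, u + v = n → a ≤ u → (X 0 : MvPolynomial (Fin 2) k) ^ u * X 1 ^ v ∈ S

variable {S : Subalgebra k (MvPolynomial (Fin 2) k)}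

namespace ContainsMonomials

theorem zero : ContainsMonomials S 0 0 := by
  rintro u v huv -
  obtain ⟨rfl, rfl⟩ : u = 0 ∧ v = 0 := by omega
  simp

theorem add {m m' a a' : ℕ} (h : ContainsMonomials S m a) (h' : ContainsMonomials S m' a')
    (ha : a ≤ m) (ha' : a' ≤ m') : ContainsMonomials S (m + m') (a + a') := by
  intro u v huv hu
  set u₁ := min m (u - a')
  have hsplit : (X 0 : MvPolynomial (Fin 2) k) ^ u * X 1 ^ v =
      (X 0 ^ u₁ * X 1 ^ (m - u₁)) * (X 0 ^ (u - u₁) * X 1 ^ (m' - (u - u₁))) := by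
    rw [mul_mul_mul_comm, ← pow_add, ← pow_add]
    congr 2 <;> omega
  rw [hsplit]
  exact mul_mem (h _ _ (by omega) (by omega)) (h' _ _ (by omega) (by omega))

theorem nsmul {m a : ℕ} (h : ContainsMonomials S m a) (ha : a ≤ m) :
    ∀ n : ℕ, ContainsMonomials S (n * m) (n * a)
  | 0 => by simpa using zero
  | n + 1 => by
    simpa only [Nat.succ_mul] using (h.nsmul ha n).add h (Nat.mul_le_mul_left n ha) ha

theorem homogeneousSubmodule_le {n : ℕ} (h : ContainsMonomials S n 0) :
    homogeneousSubmodule (Fin 2) k n ≤ Subalgebra.toSubmodule S := by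
  rw [homogeneousSubmodule_eq_finsupp_supported, AddMonoidAlgebra.supported_eq_span_single,
    Submodule.span_le]
  rintro _ ⟨D, hD, rfl⟩
  have hdeg : D 0 + D 1 = n := by simpa [Finsupp.degree_eq_sum] using hD
  simpa [single_eq_monomial, monomial_eq, Finsupp.prod_fintype] using
    h (D 0) (D 1) hdeg (Nat.zero_le _)

end ContainsMonomials

end MonomialContainment

section WeightedRationalCurve

variable {k : Type*} [Field k] {d e : ℕ}

theorem containsMonomials_adjoin_wrcGens9_d (hd : 1 ≤ d) :
    ContainsMonomials (Algebra.adjoin k (wrcGens9 k d e)) d 1 := by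
  intro u v huv hu
  obtain rfl : u = d - v := by omega
  exact Algebra.subset_adjoin (Or.inl ⟨v, by simp; omega, rfl⟩)

theorem containsMonomials_adjoin_wrcGens9_de (hd : 1 ≤ d) :
    ContainsMonomials (Algebra.adjoin k (wrcGens9 k d e)) (d * e) 0 := by
  rintro u v huv -
  rcases le_or_gt e u with hu | hu
  · have hprod := (containsMonomials_adjoin_wrcGens9_d (k := k) (e := e) hd).nsmul hd e
    exact hprod u v (by rw [huv, mul_comm]) (by simpa using hu)
  · have hgen : (X 0 : MvPolynomial (Fin 2) k) ^ (e - 1 - (e - 1 - u)) *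
        X 1 ^ (d * e - (e - 1) + (e - 1 - u)) ∈ Algebra.adjoin k (wrcGens9 k d e) :=
      Algebra.subset_adjoin (Or.inr ⟨e - 1 - u, by simp, rfl⟩)
    have he : e ≤ d * e := Nat.le_mul_of_pos_left e hd
    convert hgen using 3 <;> omega

end WeightedRationalCurve

theorem stmt9_general (k : Type*) [Field k] (d e : ℕ) (hd : 1 ≤ d)
    (R : Subalgebra k (MvPolynomial (Fin 2) k))
    (hR : R = Algebra.adjoin k (wrcGens9 k d e))
    (q : ℕ) :
    (∀ u v : ℕ, u + v = q * d * e → (X 0 : MvPolynomial (Fin 2) k) ^ u * X 1 ^ v ∈ R) ∧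
    Module.finrank k
      ↥(Subalgebra.toSubmodule R ⊓ homogeneousSubmodule (Fin 2) k (q * d * e)) =
      d * q * e + 1 := by
  subst hR
  have hmon : ContainsMonomials (Algebra.adjoin k (wrcGens9 k d e)) (q * d * e) 0 := by
    simpa [mul_assoc] using (containsMonomials_adjoin_wrcGens9_de hd).nsmul (Nat.zero_le _) q
  refine ⟨fun u v huv => hmon u v huv (Nat.zero_le u), ?_⟩
  rw [inf_eq_right.mpr hmon.homogeneousSubmodule_le, finrank_homogeneousSubmodule, Fintype.card_fin,
    show 2 + q * d * e - 1 = q * d * e + 1 by omega, Nat.choose_succ_self_right]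
  ring

/-- For `q ≥ 1`, every monomial of total `(s,t)`-degree `q·d·e` lies in `R`, and the
degree-`qe` component of `R` has full dimension `d·q·e + 1`. -/
theorem stmt9 (k : Type*) [Field k] (d e : ℕ) (hd : 1 ≤ d) (he : 1 ≤ e)
    (R : Subalgebra k (MvPolynomial (Fin 2) k))
    (hR : R = Algebra.adjoin k (wrcGens9 k d e))
    (q : ℕ) (hq : 1 ≤ q) :
    (∀ u v : ℕ, u + v = q * d * e → (X 0 : MvPolynomial (Fin 2) k) ^ u * X 1 ^ v ∈ R) ∧
    Module.finrank k
      ↥(Subalgebra.toSubmodule R ⊓ homogeneousSubmodule (Fin 2) k (q * d * e)) =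
      d * q * e + 1 :=
  stmt9_general k d e hd R hR q
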